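/- Let V = ℝ⁴ be symplectic, l ⊂ V a line, and T : V → V a unipotent symplectic map such that T fixes l^⊥ pointwise and (T − id)(V) = l (a rank-1 unipotent). Let L ⊂ V be a Lagrangian plane with l ⊄ L. Then l^⊥ ∩ L is a line m not contained in l, T^n L ∩ l^⊥ = m for all n, and T^n L converges in the Lagrangian Grassmannian, as n → +∞, to the Lagrangian c_l(L) := l + (l^⊥ ∩ L). -/

import Mathlib

/-- The standard symplectic form on ℝ⁴, as a bilinear map; coordinates 0,1,2,3
correspond to the symplectic basis e₁,e₂,f₁,f₂. -/
noncomputable def omB : (Fin 4 → ℝ) →ₗ[ℝ] (Fin 4 → ℝ) →ₗ[ℝ] ℝ :=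
  LinearMap.mk₂ ℝ (fun u v => u 0 * v 2 - u 2 * v 0 + u 1 * v 3 - u 3 * v 1)
    (fun m₁ m₂ n => by simp only [Pi.add_apply]; ring)
    (fun c m n => by simp only [Pi.smul_apply, smul_eq_mul]; ring)
    (fun m n₁ n₂ => by simp only [Pi.add_apply]; ring)
    (fun c m n => by simp only [Pi.smul_apply, smul_eq_mul]; ring)

/-- Symplectic orthogonal of a subspace. -/
noncomputable def symplPerp (l : Submodule ℝ (Fin 4 → ℝ)) : Submodule ℝ (Fin 4 → ℝ) :=
  ⨅ w ∈ l, LinearMap.ker (omB.flip w)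

/-! Write `T = 1 + δ`. Since `T` preserves the form, `ker δ ⊥ range δ = l`; as `T` fixes `l^⊥`,
this gives `ker δ = l^⊥ ⊇ l`, hence `δ² = 0` and `Tⁿ = 1 + n δ`. Thus `Tⁿ` fixes `l^⊥` pointwise
and `Tⁿ x ∈ l^⊥ ↔ x ∈ l^⊥`, which gives `Tⁿ L ∩ l^⊥ = L ∩ l^⊥`, while `n⁻¹ Tⁿ w → δ w ∈ l`.
Finally `L ⊄ l^⊥`, since otherwise `L + l` would be an isotropic subspace of dimension `3` in
`ℝ⁴`; so `L ∩ l^⊥` is a line. -/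

open Module LinearMap Filter Topology

lemma one_add_pow_of_mul_self_eq_zero {R : Type*} [Semiring R] {N : R} (hN : N * N = 0) (k : ℕ) :
    (1 + N) ^ k = 1 + k • N := by
  induction k with
  | zero => simp
  | succ k ih =>
    rw [pow_succ, ih, add_mul, one_mul, smul_mul_assoc, mul_add, mul_one, hN, add_zero, succ_nsmul]
    abel

lemma Module.End.ker_inf_map_one_add_smul {R M : Type*} [CommRing R] [AddCommGroup M] [Module R M]
    {N : Module.End R M} (hN : N * N = 0) (c : R) (L : Submodule R M) :
    ker N ⊓ L.map (1 + c • N) = ker N ⊓ L := by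
  have hfix : ∀ v ∈ ker N, (1 + c • N) v = v := fun v hv => by simp [mem_ker.mp hv]
  have hcomap : (ker N).comap (1 + c • N) = ker N := by
    rw [← ker_comp]
    congr 1
    change N * (1 + c • N) = N
    rw [mul_add, mul_one, mul_smul_comm, hN, smul_zero, add_zero]
  ext v
  simp only [Submodule.mem_inf, Submodule.mem_map]
  constructor
  · rintro ⟨hv, x, hxL, rfl⟩
    have hx : x ∈ ker N := hcomap ▸ hv
    exact ⟨hv, (hfix x hx).symm ▸ hxL⟩
  · rintro ⟨hv, hvL⟩
    exact ⟨hv, v, hvL, hfix v hv⟩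

lemma tendsto_inv_smul_add_nsmul {E : Type*} [AddCommGroup E] [Module ℝ E] [TopologicalSpace E]
    [ContinuousSMul ℝ E] [ContinuousAdd E] (v d : E) :
    Tendsto (fun k : ℕ => (k : ℝ)⁻¹ • (v + k • d)) atTop (𝓝 d) := by
  have h : Tendsto (fun k : ℕ => (k : ℝ)⁻¹ • v + d) atTop (𝓝 d) := by
    simpa using (tendsto_inv_atTop_nhds_zero_nat (𝕜 := ℝ)).smul_const v |>.add_const d
  refine h.congr' ?_
  filter_upwards [eventually_ne_atTop 0] with k hk
  rw [smul_add, ← Nat.cast_smul_eq_nsmul ℝ, smul_smul, inv_mul_cancel₀ (Nat.cast_ne_zero.mpr hk),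
    one_smul]

namespace Submodule

variable {K V : Type*} [Field K] [AddCommGroup V] [Module K V] [FiniteDimensional K V]

lemma finrank_inf_add_one_of_not_le {P L : Submodule K V} (hP : finrank K P + 1 = finrank K V)
    (hL : ¬ L ≤ P) : finrank K ↥(P ⊓ L) + 1 = finrank K L := by
  have hsup : finrank K P < finrank K ↥(P ⊔ L) :=
    finrank_lt_finrank_of_lt (lt_of_le_of_ne le_sup_left fun h => hL (h ▸ le_sup_right))
  have := finrank_sup_add_finrank_inf_eq P L
  have := (P ⊔ L).finrank_le
  omega

end Submodule

namespace LinearMap.BilinForm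

variable {K V : Type*} [Field K] [AddCommGroup V] [Module K V] {B : LinearMap.BilinForm K V}

lemma le_orthogonal_self_of_finrank_eq_one (hB : B.IsAlt) {l : Submodule K V}
    (hl : finrank K l = 1) : l ≤ B.orthogonal l := by
  intro u hu w hw
  rcases eq_or_ne u 0 with rfl | hu0
  · simp
  rw [eq_span_singleton_of_mem_of_finrank_eq_one hl hu hu0, Submodule.mem_span_singleton] at hw
  obtain ⟨c, rfl⟩ := hw
  simp [hB u]

lemma ker_sub_one_le_orthogonal_range {T : Module.End K V}
    (hT : ∀ u v, B (T u) (T v) = B u v) : ker (T - 1) ≤ B.orthogonal (range (T - 1)) := by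
  rintro v hv - ⟨u, rfl⟩
  have hTv : T v = v := sub_eq_zero.mp hv
  simp [← hT u v, hTv]

lemma orthogonal_sup (A C : Submodule K V) :
    B.orthogonal (A ⊔ C) = B.orthogonal A ⊓ B.orthogonal C := by
  refine le_antisymm (le_inf (orthogonal_le le_sup_left) (orthogonal_le le_sup_right)) ?_
  rintro v ⟨hA, hC⟩ n hn
  obtain ⟨a, ha, c, hc, rfl⟩ := Submodule.mem_sup.mp hn
  simp [hA a ha, hC c hc]

variable [FiniteDimensional K V]

lemma two_mul_finrank_le_of_le_orthogonal (hB : B.Nondegenerate) {W : Submodule K V}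
    (hW : W ≤ B.orthogonal W) : 2 * finrank K W ≤ finrank K V := by
  have := Submodule.finrank_mono hW
  rw [finrank_orthogonal hB] at this
  have := W.finrank_le
  omega

lemma finrank_orthogonal_add_one (hB : B.Nondegenerate) {l : Submodule K V}
    (hl : finrank K l = 1) : finrank K (B.orthogonal l) + 1 = finrank K V := by
  rw [finrank_orthogonal hB]
  have := l.finrank_le
  omega

lemma not_le_orthogonal_of_lagrangian (hB : B.Nondegenerate) (hB' : B.IsRefl)
    {l L : Submodule K V} (hl : l ≤ B.orthogonal l) (hL : L ≤ B.orthogonal L)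
    (hLV : finrank K V ≤ 2 * finrank K L) (hlL : ¬ l ≤ L) : ¬ L ≤ B.orthogonal l := by
  intro hLl
  have hlL' : l ≤ B.orthogonal L := fun u hu w hw => hB' _ _ (hLl hw u hu)
  have hiso : L ⊔ l ≤ B.orthogonal (L ⊔ l) := by
    rw [orthogonal_sup]
    exact sup_le (le_inf hL hLl) (le_inf hlL' hl)
  have := two_mul_finrank_le_of_le_orthogonal hB hiso
  have hle : finrank K ↥(L ⊔ l) ≤ finrank K L := by omega
  exact hlL ((Submodule.eq_of_le_of_finrank_le le_sup_left hle) ▸ le_sup_right)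

end LinearMap.BilinForm

lemma omB_apply (u v : Fin 4 → ℝ) :
    omB u v = u 0 * v 2 - u 2 * v 0 + u 1 * v 3 - u 3 * v 1 := rfl

lemma omB_isAlt : BilinForm.IsAlt omB := fun u => by
  rw [omB_apply]; ring

lemma omB_isRefl : BilinForm.IsRefl omB := omB_isAlt.isRefl

lemma omB_nondegenerate : BilinForm.Nondegenerate omB := by
  refine omB_isRefl.nondegenerate_iff_separatingLeft.mpr fun u hu => ?_
  have h0 := hu (Pi.single 2 1)
  have h1 := hu (Pi.single 3 1)
  have h2 := hu (Pi.single 0 1)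
  have h3 := hu (Pi.single 1 1)
  simp [omB_apply] at h0 h1 h2 h3
  ext i
  fin_cases i <;> assumption

lemma symplPerp_eq_orthogonal (l : Submodule ℝ (Fin 4 → ℝ)) :
    symplPerp l = BilinForm.orthogonal omB l := by
  ext v
  simp only [symplPerp, Submodule.mem_iInf, LinearMap.mem_ker, BilinForm.mem_orthogonal_iff]
  exact forall₂_congr fun w _ => ⟨fun h => omB_isRefl _ _ h, fun h => omB_isRefl _ _ h⟩

/-- Let T be a rank-1 unipotent symplectic map of ℝ⁴ fixing l^⊥ pointwise with
(T − id)(V) = l, and let L be a Lagrangian with l ⊄ L.  Then l^⊥ ∩ L is a line m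
not contained in l, T^n L ∩ l^⊥ = m for all n, and T^n L converges to the
Lagrangian c_l(L) = l + m: the fixed part is m, and for any w ∈ L ∖ l^⊥ the
rescaled iterates n⁻¹·(Tⁿ w) converge to a nonzero vector of l. -/
theorem rank_one_unipotent_contracts_lagrangians
    (T : (Fin 4 → ℝ) →ₗ[ℝ] (Fin 4 → ℝ))
    (hsymp : ∀ u v : Fin 4 → ℝ, omB (T u) (T v) = omB u v)
    (l : Submodule ℝ (Fin 4 → ℝ)) (hl : Module.finrank ℝ l = 1)
    (hfix : ∀ v ∈ symplPerp l, T v = v)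
    (hrange : LinearMap.range (T - LinearMap.id) = l)
    (L : Submodule ℝ (Fin 4 → ℝ)) (hL2 : Module.finrank ℝ L = 2)
    (hLag : ∀ u ∈ L, ∀ v ∈ L, omB u v = 0) (hnot : ¬ l ≤ L) :
    (Module.finrank ℝ ↥(symplPerp l ⊓ L) = 1 ∧ ¬ (symplPerp l ⊓ L ≤ l)) ∧
    (∀ k : ℕ, symplPerp l ⊓ L.map (T ^ k) = symplPerp l ⊓ L) ∧
    (∀ w ∈ L, w ∉ symplPerp l →
      ∃ u ∈ l, u ≠ 0 ∧
        Filter.Tendsto (fun k : ℕ => (k : ℝ)⁻¹ • ((T ^ k) w))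
          Filter.atTop (nhds u)) := by
  rw [symplPerp_eq_orthogonal] at hfix ⊢
  rw [← Module.End.one_eq_id] at hrange
  set δ := T - 1
  have hl_iso : l ≤ BilinForm.orthogonal omB l :=
    BilinForm.le_orthogonal_self_of_finrank_eq_one omB_isAlt hl
  have hker : ker δ = BilinForm.orthogonal omB l := by
    refine le_antisymm ?_ fun v hv => by simp [δ, hfix v hv]
    rw [← hrange]
    exact BilinForm.ker_sub_one_le_orthogonal_range hsymp
  have hδδ : δ * δ = 0 := range_le_ker_iff.mp (hrange.trans_le (hl_iso.trans hker.ge))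
  have hpow (k : ℕ) : T ^ k = 1 + k • δ := by
    simpa [δ] using one_add_pow_of_mul_self_eq_zero hδδ k
  have hLP : ¬ L ≤ BilinForm.orthogonal omB l :=
    BilinForm.not_le_orthogonal_of_lagrangian omB_nondegenerate omB_isRefl hl_iso
      (fun v hv u hu => hLag u hu v hv) (by simp [hL2]) hnot
  have hm : finrank ℝ ↥(BilinForm.orthogonal omB l ⊓ L) = 1 := by
    have := Submodule.finrank_inf_add_one_of_not_le
      (BilinForm.finrank_orthogonal_add_one omB_nondegenerate hl) hLP
    omega
  refine ⟨⟨hm, fun hle => hnot ?_⟩, fun k => ?_, fun w _ hwP => ⟨δ w, ?_, ?_, ?_⟩⟩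
  · rw [← Submodule.eq_of_le_of_finrank_eq hle (hm.trans hl.symm)]
    exact inf_le_right
  · rw [← hker, hpow, ← Nat.cast_smul_eq_nsmul ℝ]
    exact Module.End.ker_inf_map_one_add_smul hδδ _ L
  · exact hrange ▸ mem_range_self δ w
  · rwa [Ne, ← LinearMap.mem_ker, hker]
  · simpa [hpow] using tendsto_inv_smul_add_nsmul w (δ w)
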